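/- Let (G,Γ₁,Γ₂) be a boundary triple for S, and let A, B be bounded linear operators on G with A B* = B A* and M^{A,B} boundedly invertible (a normalized pair), where M^{A,B}(x₁,x₂) = (A x₁ − B x₂, B x₁ + A x₂) on G ⊕ G. Then for every z in the resolvent set of H⁰: z belongs to the spectrum of H^{A,B} if and only if 0 belongs to the spectrum of B Q(z) − A, if and only if 0 belongs to the spectrum of Q(z) B* − A*. -/

import Mathlib

open ContinuousLinearMap

variable {H : Type*} [NormedAddCommGroup H] [InnerProductSpace ℂ H] [CompleteSpace H]
variable {G : Type*} [NormedAddCommGroup G] [InnerProductSpace ℂ G] [CompleteSpace G]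

/-- The operator `M^{A,B}` on `G × G`, `(x₁,x₂) ↦ (A x₁ - B x₂, B x₁ + A x₂)`. -/
noncomputable def MAB (A B : G →L[ℂ] G) : (G × G) →L[ℂ] (G × G) :=
  ((A.comp (fst ℂ G G)) - (B.comp (snd ℂ G G))).prod
    ((B.comp (fst ℂ G G)) + (A.comp (snd ℂ G G)))

/-- A bounded operator is boundedly invertible if it has a bounded two-sided inverse. -/
def IsBoundedlyInvertible {E F : Type*} [NormedAddCommGroup E] [NormedSpace ℂ E]
    [NormedAddCommGroup F] [NormedSpace ℂ F] (T : E →L[ℂ] F) : Prop :=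
  ∃ T' : F →L[ℂ] E, (∀ x, T' (T x) = x) ∧ (∀ y, T (T' y) = y)

/-- A densely defined operator is symmetric if `⟪Sφ, ψ⟫ = ⟪φ, Sψ⟫` on its domain. -/
def IsSymmetricPMap (S : H →ₗ.[ℂ] H) : Prop :=
  ∀ φ ψ : S.domain, (inner ℂ (S φ) (ψ : H) : ℂ) = inner ℂ (φ : H) (S ψ)

/-- A boundary triple `(G, Γ₁, Γ₂)` for a symmetric operator `S`: two boundary maps
on `dom S*` satisfying the abstract Green identity and joint surjectivity. -/
structure BoundaryTriple (S : H →ₗ.[ℂ] H) (G : Type*) [NormedAddCommGroup G]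
    [InnerProductSpace ℂ G] [CompleteSpace G] where
  Γ₁ : S.adjoint.domain →ₗ[ℂ] G
  Γ₂ : S.adjoint.domain →ₗ[ℂ] G
  green : ∀ φ ψ : S.adjoint.domain,
    (inner ℂ (φ : H) (S.adjoint ψ) : ℂ) - inner ℂ (S.adjoint φ) (ψ : H)
      = (inner ℂ (Γ₁ φ) (Γ₂ ψ) : ℂ) - inner ℂ (Γ₂ φ) (Γ₁ ψ)
  surj : Function.Surjective fun φ : S.adjoint.domain => (Γ₁ φ, Γ₂ φ)

/-- The restriction of a partially defined operator `T` to a submodule `K` of its domain. -/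
noncomputable def pmapRestrict (T : H →ₗ.[ℂ] H) (K : Submodule ℂ T.domain) : H →ₗ.[ℂ] H where
  domain := K.map T.domain.subtype
  toFun := (T.toFun.comp K.subtype).comp
    (Submodule.equivMapOfInjective T.domain.subtype
      (Submodule.injective_subtype T.domain) K).symm.toLinearMap

/-- The distinguished extension `H⁰`: the restriction of `S*` to `ker Γ₁`. -/
noncomputable def H0 (S : H →ₗ.[ℂ] H) (BT : BoundaryTriple S G) : H →ₗ.[ℂ] H :=
  pmapRestrict S.adjoint (LinearMap.ker BT.Γ₁)

/-- The extension `H^{A,B}`: the restriction of `S*` to `{φ : A Γ₁ φ = B Γ₂ φ}`. -/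
noncomputable def HAB (S : H →ₗ.[ℂ] H) (BT : BoundaryTriple S G) (A B : G →L[ℂ] G) :
    H →ₗ.[ℂ] H :=
  pmapRestrict S.adjoint
    (LinearMap.ker ((A.toLinearMap.comp BT.Γ₁) - (B.toLinearMap.comp BT.Γ₂)))

/-- `R` is the resolvent of `T` at `z`: a bounded, everywhere defined two-sided inverse
of `T - z`. -/
def IsResolventOf (T : H →ₗ.[ℂ] H) (z : ℂ) (R : H →L[ℂ] H) : Prop :=
  (∀ f : H, ∃ φ : T.domain, (φ : H) = R f ∧ T φ - z • (φ : H) = f) ∧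
  (∀ φ : T.domain, R (T φ - z • (φ : H)) = φ)

/-- `z` is in the resolvent set of `T`. -/
def InResolventSet (T : H →ₗ.[ℂ] H) (z : ℂ) : Prop := ∃ R, IsResolventOf T z R

/-- `γz` is the `Γ`-field at `z`: the inverse of `Γ₁` restricted to the deficiency
space `N_z = ker (S* - z)`. -/
def IsGammaField (S : H →ₗ.[ℂ] H) (BT : BoundaryTriple S G) (z : ℂ) (γz : G →L[ℂ] H) : Prop :=
  (∀ ξ : G, ∃ φ : S.adjoint.domain, (φ : H) = γz ξ ∧ S.adjoint φ = z • (φ : H) ∧ BT.Γ₁ φ = ξ) ∧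
  (∀ φ : S.adjoint.domain, S.adjoint φ = z • (φ : H) → γz (BT.Γ₁ φ) = (φ : H))

/-- `Qz` is the `Q`-function (Weyl function) at `z`: `Qz = Γ₂ ∘ γz`. -/
def IsQFunction (S : H →ₗ.[ℂ] H) (BT : BoundaryTriple S G) (z : ℂ)
    (γz : G →L[ℂ] H) (Qz : G →L[ℂ] G) : Prop :=
  IsGammaField S BT z γz ∧
    ∀ φ : S.adjoint.domain, S.adjoint φ = z • (φ : H) → Qz (BT.Γ₁ φ) = BT.Γ₂ φ

/-!
Let `R₀` be the resolvent of `H⁰` at `z`. Every `φ ∈ dom S*` decomposes as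
`φ = R₀ f + γ(z) Γ₁φ` with `f = (S* - z) φ`, and then `Γ₂ φ = E f + Q(z) Γ₁φ`, where
`E = γ(z)† (1 + (z - z̄) R₀)` is bounded by the Green identity. So the boundary condition
`A Γ₁φ = B Γ₂φ` reads `(B Q(z) - A) Γ₁φ = -B E f`: `H^{A,B} - z` is boundedly invertible exactly
when `B Q(z) - A` is, and then its inverse is Krein's `R₀ - γ(z) (B Q(z) - A)⁻¹ B E`.

For a normalized pair, `‖A* x‖² + ‖B* x‖² ≥ c ‖x‖²`, so `A A* + B B*` is invertible and the
solutions of `A u = B v` are exactly the pairs `(B* x, A* x)`. Substituting this parametrisation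
transfers injectivity and surjectivity between `B Q - A` and `Q B* - A*`.
-/

section Restriction

variable {E : Type*} [NormedAddCommGroup E] [InnerProductSpace ℂ E]
  {T : E →ₗ.[ℂ] E} {K : Submodule ℂ T.domain}

lemma pmapRestrict_apply {x : (pmapRestrict T K).domain} {φ : T.domain} (hφ : φ ∈ K)
    (hx : (φ : E) = x) : pmapRestrict T K x = T φ := by
  let e := Submodule.equivMapOfInjective T.domain.subtype (Submodule.injective_subtype _) K
  have : e.symm x = ⟨φ, hφ⟩ := e.symm_apply_eq.2 (Subtype.ext hx.symm)
  change T (e.symm x : T.domain) = T φ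
  rw [this]

lemma isResolventOf_pmapRestrict_iff {z : ℂ} {R : E →L[ℂ] E} :
    IsResolventOf (pmapRestrict T K) z R ↔
      (∀ f, ∃ φ ∈ K, (φ : E) = R f ∧ T φ - z • (φ : E) = f) ∧
        ∀ φ ∈ K, R (T φ - z • (φ : E)) = φ := by
  have mem_map (x : (pmapRestrict T K).domain) : ∃ φ ∈ K, (φ : E) = x := Submodule.mem_map.1 x.2
  let restrict (φ : T.domain) (hφ : φ ∈ K) : (pmapRestrict T K).domain :=
    ⟨φ, Submodule.mem_map_of_mem hφ⟩
  refine and_congr ⟨fun h f => ?_, fun h f => ?_⟩ ⟨fun h φ hφ => ?_, fun h x => ?_⟩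
  · obtain ⟨x, hxR, hxf⟩ := h f
    obtain ⟨φ, hφ, hφx⟩ := mem_map x
    exact ⟨φ, hφ, hφx.trans hxR, by rwa [← pmapRestrict_apply hφ hφx, hφx]⟩
  · obtain ⟨φ, hφ, hφR, hφf⟩ := h f
    exact ⟨restrict φ hφ, hφR, by rwa [pmapRestrict_apply (x := restrict φ hφ) hφ rfl]⟩
  · simpa [pmapRestrict_apply (x := restrict φ hφ) hφ rfl] using h (restrict φ hφ)
  · obtain ⟨φ, hφ, hφx⟩ := mem_map x
    rw [pmapRestrict_apply hφ hφx, ← hφx]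
    exact h φ hφ

end Restriction

lemma isBoundedlyInvertible_iff_bijective {E F : Type*} [NormedAddCommGroup E] [NormedSpace ℂ E]
    [CompleteSpace E] [NormedAddCommGroup F] [NormedSpace ℂ F] [CompleteSpace F]
    (T : E →L[ℂ] F) : IsBoundedlyInvertible T ↔ Function.Bijective T := by
  refine ⟨fun ⟨_, hl, hr⟩ =>
    ⟨Function.LeftInverse.injective hl, Function.RightInverse.surjective hr⟩, fun h => ?_⟩
  let e := ContinuousLinearEquiv.ofBijective T (LinearMap.ker_eq_bot.mpr h.1)
    (LinearMap.range_eq_top.mpr h.2)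
  exact ⟨e.symm, e.symm_apply_apply, e.apply_symm_apply⟩

section NormalizedPair

variable {V : Type*} [NormedAddCommGroup V] [InnerProductSpace ℂ V] {A B : V →L[ℂ] V}

lemma MAB_apply (p : V × V) : MAB A B p = (A p.1 - B p.2, B p.1 + A p.2) := rfl

lemma exists_apply_sub_apply_eq (hM : IsBoundedlyInvertible (MAB A B)) (w : V) :
    ∃ u v, A u - B v = w := by
  obtain ⟨M', -, hr⟩ := hM
  exact ⟨(M' (w, 0)).1, (M' (w, 0)).2, congrArg Prod.fst (hr (w, 0))⟩

variable [CompleteSpace V]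

lemma exists_norm_sq_mul_le (hM : IsBoundedlyInvertible (MAB A B)) :
    ∃ c : ℝ, 0 < c ∧ ∀ x, ‖x‖ ^ 2 * c ≤ ‖adjoint A x‖ ^ 2 + ‖adjoint B x‖ ^ 2 := by
  obtain ⟨M', -, hr⟩ := hM
  set K := ‖M'‖
  refine ⟨(2 * K ^ 2 + 1)⁻¹, by positivity, fun x => ?_⟩
  set p := M' (x, 0)
  have hx : A p.1 - B p.2 = x := congrArg Prod.fst (hr (x, 0))
  have hp : ‖p‖ ≤ K * ‖x‖ := by simpa [p] using M'.le_opNorm (x, 0)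
  have hp₁ : ‖p.1‖ ≤ K * ‖x‖ := (norm_fst_le p).trans hp
  have hp₂ : ‖p.2‖ ≤ K * ‖x‖ := (norm_snd_le p).trans hp
  set a := ‖adjoint A x‖
  set b := ‖adjoint B x‖
  have h₁ : RCLike.re (inner ℂ (adjoint A x) p.1) ≤ a * ‖p.1‖ :=
    (RCLike.re_le_norm _).trans <| norm_inner_le_norm _ _
  have h₂ : -RCLike.re (inner ℂ (adjoint B x) p.2) ≤ b * ‖p.2‖ :=
    (neg_le_abs _).trans <| (RCLike.abs_re_le_norm _).trans <| (norm_inner_le_norm _ _)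
  have hsq : ‖x‖ ^ 2 ≤ K * ‖x‖ * (a + b) :=
    calc ‖x‖ ^ 2 = RCLike.re (inner ℂ x (A p.1 - B p.2)) := by
          rw [hx, inner_self_eq_norm_sq]
      _ = RCLike.re (inner ℂ (adjoint A x) p.1) - RCLike.re (inner ℂ (adjoint B x) p.2) := by
          rw [inner_sub_right, adjoint_inner_left, adjoint_inner_left, map_sub]
      _ ≤ K * ‖x‖ * (a + b) := by nlinarith [norm_nonneg (adjoint A x), norm_nonneg (adjoint B x)]
  have hle : ‖x‖ ≤ K * (a + b) := by
    rcases (norm_nonneg x).eq_or_lt with h0 | hpos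
    · rw [← h0]; positivity
    · nlinarith
  rw [← div_eq_mul_inv, div_le_iff₀ (by positivity)]
  nlinarith [sq_nonneg (a - b), norm_nonneg x]

lemma isUnit_comp_adjoint_add_comp_adjoint (hM : IsBoundedlyInvertible (MAB A B)) :
    IsUnit (A ∘L adjoint A + B ∘L adjoint B) := by
  obtain ⟨c, hc, hle⟩ := exists_norm_sq_mul_le hM
  refine isUnit_of_forall_le_norm_inner_map _ (c := ⟨c, hc.le⟩) hc fun x => ?_
  have hre : RCLike.re (inner ℂ ((A ∘L adjoint A + B ∘L adjoint B) x) x)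
      = ‖adjoint A x‖ ^ 2 + ‖adjoint B x‖ ^ 2 := by
    rw [apply_norm_sq_eq_inner_adjoint_left, apply_norm_sq_eq_inner_adjoint_left]
    simp [adjoint_adjoint]
  exact (hle x).trans (hre ▸ RCLike.re_le_norm _)

lemma eq_zero_of_adjoint_apply_eq_zero (hM : IsBoundedlyInvertible (MAB A B)) {x : V}
    (hA : adjoint A x = 0) (hB : adjoint B x = 0) : x = 0 := by
  obtain ⟨c, hc, hle⟩ := exists_norm_sq_mul_le hM
  have hx : ‖x‖ ^ 2 * c ≤ 0 := by simpa [hA, hB] using hle x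
  have : ‖x‖ ^ 2 = 0 := le_antisymm (nonpos_of_mul_nonpos_left hx hc) (sq_nonneg _)
  simpa using this

lemma exists_eq_adjoint_of_apply_eq (hAB : A ∘L adjoint B = B ∘L adjoint A)
    (hM : IsBoundedlyInvertible (MAB A B)) {u v : V} (huv : A u = B v) :
    ∃ x, u = adjoint B x ∧ v = adjoint A x := by
  obtain ⟨x, hx⟩ := (isUnit_iff_bijective.1 (isUnit_comp_adjoint_add_comp_adjoint hM)).2
    (B u + A v)
  have hABx : A (adjoint B x) = B (adjoint A x) := congrArg (· x) hAB
  obtain ⟨M', hl, -⟩ := hM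
  have hker : MAB A B (u - adjoint B x, v - adjoint A x) = 0 := by
    simp only [MAB_apply, map_sub, Prod.mk_eq_zero]
    constructor
    · rw [huv, hABx]; abel
    · simp only [add_apply, comp_apply] at hx
      rw [sub_add_sub_comm, ← hx]; abel
  have h0 := hl (u - adjoint B x, v - adjoint A x)
  rw [hker, map_zero, eq_comm, Prod.mk_eq_zero, sub_eq_zero, sub_eq_zero] at h0
  exact ⟨x, h0⟩

variable (hAB : A ∘L adjoint B = B ∘L adjoint A) (hM : IsBoundedlyInvertible (MAB A B))
  (Q : V →L[ℂ] V)
include hAB hM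

lemma injective_comp_sub_iff :
    Function.Injective (B ∘L Q - A) ↔ Function.Injective (Q ∘L adjoint B - adjoint A) := by
  have hABx (x : V) : A (adjoint B x) = B (adjoint A x) := congrArg (· x) hAB
  simp only [injective_iff_map_eq_zero, sub_apply, comp_apply, sub_eq_zero]
  constructor
  · intro hX x hx
    have hB : adjoint B x = 0 := hX _ (by rw [hx, hABx])
    exact eq_zero_of_adjoint_apply_eq_zero hM (by rw [← hx, hB, map_zero]) hB
  · intro hY ξ hξ
    obtain ⟨x, rfl, hx⟩ := exists_eq_adjoint_of_apply_eq hAB hM hξ.symm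
    rw [hY x hx, map_zero]

lemma surjective_comp_sub_iff :
    Function.Surjective (B ∘L Q - A) ↔ Function.Surjective (Q ∘L adjoint B - adjoint A) := by
  simp only [Function.Surjective, sub_apply, comp_apply]
  constructor
  · intro hX η
    obtain ⟨ξ, hξ⟩ := hX (-B η)
    obtain ⟨x, hx₁, hx₂⟩ := exists_eq_adjoint_of_apply_eq hAB hM
      (u := -ξ) (v := -η - Q ξ) (by rw [map_neg, map_sub, map_neg, ← hξ]; abel)
    refine ⟨x, ?_⟩
    rw [← hx₁, ← hx₂, map_neg]
    abel
  · intro hY η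
    obtain ⟨u, v, huv⟩ := exists_apply_sub_apply_eq hM (-η)
    obtain ⟨x, hx⟩ := hY (Q u - v)
    refine ⟨u - adjoint B x, ?_⟩
    have hABx : A (adjoint B x) = B (adjoint A x) := congrArg (· x) hAB
    rw [map_sub, map_sub, map_sub, hABx, sub_eq_iff_eq_add.1 hx, ← neg_neg η, ← huv]
    simp only [map_add, map_sub]
    abel

lemma bijective_comp_sub_iff :
    Function.Bijective (B ∘L Q - A) ↔ Function.Bijective (Q ∘L adjoint B - adjoint A) :=
  and_congr (injective_comp_sub_iff hAB hM Q) (surjective_comp_sub_iff hAB hM Q)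

end NormalizedPair

section BoundaryTriple

variable {S : H →ₗ.[ℂ] H} {BT : BoundaryTriple S G} {z : ℂ} {γz : G →L[ℂ] H} {Qz : G →L[ℂ] G}

lemma isResolventOf_HAB_iff {A B : G →L[ℂ] G} {R : H →L[ℂ] H} :
    IsResolventOf (HAB S BT A B) z R ↔
      (∀ f, ∃ φ : S.adjoint.domain, A (BT.Γ₁ φ) = B (BT.Γ₂ φ) ∧ (φ : H) = R f ∧
          S.adjoint φ - z • (φ : H) = f) ∧
        ∀ φ : S.adjoint.domain, A (BT.Γ₁ φ) = B (BT.Γ₂ φ) →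
          R (S.adjoint φ - z • (φ : H)) = φ :=
  isResolventOf_pmapRestrict_iff.trans (by simp [sub_eq_zero])

lemma IsQFunction.exists_eigenvector (hQ : IsQFunction S BT z γz Qz) (ξ : G) :
    ∃ φ : S.adjoint.domain, (φ : H) = γz ξ ∧ S.adjoint φ = z • (φ : H) ∧
      BT.Γ₁ φ = ξ ∧ BT.Γ₂ φ = Qz ξ := by
  obtain ⟨φ, hφγ, hφz, hφ₁⟩ := hQ.1.1 ξ
  exact ⟨φ, hφγ, hφz, hφ₁, hφ₁ ▸ (hQ.2 φ hφz).symm⟩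

lemma IsGammaField.Γ₂_eq_adjoint_apply (hγ : IsGammaField S BT z γz) {φ : S.adjoint.domain}
    (hφ : BT.Γ₁ φ = 0) : BT.Γ₂ φ = adjoint γz (S.adjoint φ - (starRingEnd ℂ) z • (φ : H)) := by
  refine ext_inner_right ℂ fun η => ?_
  obtain ⟨ψ, hψγ, hψz, hψ₁⟩ := hγ.1 η
  have hgreen := BT.green φ ψ
  rw [hφ, hψ₁, hψz, hψγ] at hgreen
  rw [adjoint_inner_left, inner_sub_left, inner_smul_left]
  rw [inner_smul_right, inner_zero_left, zero_sub] at hgreen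
  simp only [starRingEnd_self_apply]
  linear_combination hgreen

lemma IsGammaField.exists_solution (hγ : IsGammaField S BT z γz) {R₀ : H →L[ℂ] H}
    (hR₀ : IsResolventOf (H0 S BT) z R₀) (f : H) (ξ : G) :
    ∃ φ : S.adjoint.domain, S.adjoint φ - z • (φ : H) = f ∧ BT.Γ₁ φ = ξ := by
  obtain ⟨ψ, hψ, -, hψf⟩ := (isResolventOf_pmapRestrict_iff.1 hR₀).1 f
  obtain ⟨χ, -, hχz, hχ₁⟩ := hγ.1 ξ
  refine ⟨ψ + χ, ?_, by rw [map_add, LinearMap.mem_ker.1 hψ, hχ₁, zero_add]⟩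
  rw [LinearPMap.map_add, hχz, ← hψf]
  simp only [Submodule.coe_add, smul_add]
  abel

variable (hQ : IsQFunction S BT z γz Qz) {R₀ : H →L[ℂ] H} (hR₀ : IsResolventOf (H0 S BT) z R₀)
include hQ hR₀

lemma IsQFunction.exists_decomposition :
    ∃ E : H →L[ℂ] G, ∀ φ : S.adjoint.domain,
      (φ : H) = R₀ (S.adjoint φ - z • (φ : H)) + γz (BT.Γ₁ φ) ∧
        BT.Γ₂ φ = E (S.adjoint φ - z • (φ : H)) + Qz (BT.Γ₁ φ) := by
  refine ⟨adjoint γz ∘L (ContinuousLinearMap.id ℂ H + (z - (starRingEnd ℂ) z) • R₀),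
    fun φ => ?_⟩
  set f := S.adjoint φ - z • (φ : H) with hf
  obtain ⟨ψ, hψ, hψR, hψf⟩ := (isResolventOf_pmapRestrict_iff.1 hR₀).1 f
  have hψ₁ : BT.Γ₁ ψ = 0 := LinearMap.mem_ker.1 hψ
  have hχz : S.adjoint (φ - ψ) = z • ((φ - ψ : S.adjoint.domain) : H) := by
    rw [LinearPMap.map_sub, Submodule.coe_sub, smul_sub]
    linear_combination (norm := module) -hψf - hf
  have hχ₁ : BT.Γ₁ (φ - ψ) = BT.Γ₁ φ := by rw [map_sub, hψ₁, sub_zero]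
  have hχγ := hQ.1.2 _ hχz
  have hχQ := hQ.2 _ hχz
  rw [hχ₁] at hχγ hχQ
  constructor
  · rw [hχγ, Submodule.coe_sub, ← hψR]
    abel
  · have hψ₂ : BT.Γ₂ ψ = adjoint γz (f + (z - (starRingEnd ℂ) z) • R₀ f) := by
      rw [hQ.1.Γ₂_eq_adjoint_apply hψ₁, ← hψR, ← hψf]
      congr 1
      module
    rw [hχQ, map_sub BT.Γ₂ φ ψ, hψ₂]
    simp only [comp_apply, add_apply, id_apply, smul_apply]
    abel

variable {A B : G →L[ℂ] G}

lemma IsQFunction.bijective_of_isResolventOf_HAB (hsurj : ∀ w, ∃ u v, A u - B v = w)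
    {R : H →L[ℂ] H} (hR : IsResolventOf (HAB S BT A B) z R) :
    Function.Bijective (B ∘L Qz - A) := by
  obtain ⟨E, hdec⟩ := hQ.exists_decomposition hR₀
  obtain ⟨hsolve, hunique⟩ := isResolventOf_HAB_iff.1 hR
  refine ⟨injective_iff_map_eq_zero _ |>.2 fun ξ hξ => ?_, fun η => ?_⟩
  · obtain ⟨φ, -, hφz, hφ₁, hφ₂⟩ := hQ.exists_eigenvector ξ
    have hbc : A (BT.Γ₁ φ) = B (BT.Γ₂ φ) := by
      rw [hφ₁, hφ₂, eq_comm, ← sub_eq_zero]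
      simpa using hξ
    have hφ := hunique φ hbc
    rw [hφz, sub_self, map_zero, eq_comm, ZeroMemClass.coe_eq_zero] at hφ
    rw [← hφ₁, hφ, map_zero]
  · obtain ⟨u, v, huv⟩ := hsurj (-η)
    obtain ⟨φ₀, hφ₀⟩ := BT.surj (u, v)
    obtain ⟨φ, hbc, -, hφf⟩ := hsolve (S.adjoint φ₀ - z • (φ₀ : H))
    have hQ₀ := (hdec φ₀).2
    have hQφ := (hdec φ).2
    rw [hφf] at hQφ
    simp only [Prod.ext_iff] at hφ₀
    refine ⟨BT.Γ₁ φ₀ - BT.Γ₁ φ, ?_⟩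
    simp only [sub_apply, comp_apply, map_sub]
    rw [eq_sub_of_add_eq' hQ₀.symm, eq_sub_of_add_eq' hQφ.symm, hφ₀.1, hφ₀.2, ← neg_neg η,
      ← huv]
    simp only [map_sub]
    rw [hbc]
    abel

lemma IsQFunction.inResolventSet_HAB (hX : IsBoundedlyInvertible (B ∘L Qz - A)) :
    InResolventSet (HAB S BT A B) z := by
  obtain ⟨X', hl, hr⟩ := hX
  obtain ⟨E, hdec⟩ := hQ.exists_decomposition hR₀
  have hbc_iff (f : H) (ξ : G) :
      A ξ = B (E f + Qz ξ) ↔ (B ∘L Qz - A) ξ = -B (E f) := by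
    rw [sub_apply, comp_apply, map_add, eq_neg_iff_add_eq_zero, eq_comm, ← sub_eq_zero]
    constructor <;> intro h <;> rw [← h] <;> abel
  refine ⟨R₀ - γz ∘L X' ∘L B ∘L E, isResolventOf_HAB_iff.2 ⟨fun f => ?_, fun φ hbc => ?_⟩⟩
  · obtain ⟨φ, hφf, hφ₁⟩ := hQ.1.exists_solution hR₀ f (X' (-B (E f)))
    obtain ⟨hφ, hφ₂⟩ := hdec φ
    rw [hφf, hφ₁] at hφ hφ₂
    refine ⟨φ, ?_, ?_, hφf⟩
    · rw [hφ₁, hφ₂, hbc_iff, hr]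
    · rw [hφ, sub_apply, comp_apply, comp_apply, comp_apply, map_neg, map_neg, sub_eq_add_neg]
  · obtain ⟨hφ, hφ₂⟩ := hdec φ
    rw [hφ₂, hbc_iff] at hbc
    rw [sub_apply, comp_apply, comp_apply, comp_apply, ← neg_neg (B _), ← hbc, map_neg, hl,
      map_neg, sub_neg_eq_add, ← hφ]

end BoundaryTriple

theorem spectrum_HAB_iff_general (S : H →ₗ.[ℂ] H)
    (BT : BoundaryTriple S G) (A B : G →L[ℂ] G)
    (hAB : A ∘L adjoint B = B ∘L adjoint A) (hM : IsBoundedlyInvertible (MAB A B)) :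
    ∀ z : ℂ, InResolventSet (H0 S BT) z →
      ∀ (γz : G →L[ℂ] H) (Qz : G →L[ℂ] G), IsQFunction S BT z γz Qz →
        ((¬ InResolventSet (HAB S BT A B) z ↔ ¬ IsBoundedlyInvertible (B ∘L Qz - A)) ∧
         (¬ InResolventSet (HAB S BT A B) z ↔
            ¬ IsBoundedlyInvertible (Qz ∘L adjoint B - adjoint A))) := by
  rintro z ⟨R₀, hR₀⟩ γz Qz hQ
  have hresolvent : InResolventSet (HAB S BT A B) z ↔ Function.Bijective (B ∘L Qz - A) :=
    ⟨fun ⟨_, hR⟩ => hQ.bijective_of_isResolventOf_HAB hR₀ (exists_apply_sub_apply_eq hM) hR,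
      fun h => hQ.inResolventSet_HAB hR₀ ((isBoundedlyInvertible_iff_bijective _).2 h)⟩
  simp only [isBoundedlyInvertible_iff_bijective, ← bijective_comp_sub_iff hAB hM Qz,
    hresolvent, and_self]

/-- For a normalized pair `(A,B)` and `z` in the resolvent set of `H⁰`:
`z` belongs to the spectrum of `H^{A,B}` iff `0` belongs to the spectrum of `BQ(z) − A`,
iff `0` belongs to the spectrum of `Q(z)B* − A*`. -/
theorem spectrum_HAB_iff (S : H →ₗ.[ℂ] H)
    (hdense : Dense (S.domain : Set H)) (hclosed : S.IsClosed) (hsymm : IsSymmetricPMap S)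
    (BT : BoundaryTriple S G) (A B : G →L[ℂ] G)
    (hAB : A ∘L adjoint B = B ∘L adjoint A) (hM : IsBoundedlyInvertible (MAB A B)) :
    ∀ z : ℂ, InResolventSet (H0 S BT) z →
      ∀ (γz : G →L[ℂ] H) (Qz : G →L[ℂ] G), IsQFunction S BT z γz Qz →
        ((¬ InResolventSet (HAB S BT A B) z ↔ ¬ IsBoundedlyInvertible (B ∘L Qz - A)) ∧
         (¬ InResolventSet (HAB S BT A B) z ↔
            ¬ IsBoundedlyInvertible (Qz ∘L adjoint B - adjoint A))) :=
  spectrum_HAB_iff_general S BT A B hAB hM
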